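/- arXiv:1501.03027 — 8 statements merged into one kernel-verified Lean document; each statement's English description precedes it below -/
import Mathlib

section
/- Suppose the partial action (X,P,T) is directed. Then the relation on X defined by x ∼ y iff there exist m, n ∈ P with x ∈ U(m), y ∈ U(n) and x·m = y·n is an equivalence relation on X (reflexivity and symmetry are immediate; transitivity uses directedness). -/
/-!
Transitivity: if `x·m = y·n` and `y·p = z·q`, then `y ∈ U n ∩ U p`, so directedness gives
`r = n a = p b` with `y ∈ U r`. Since `y·n·a` is defined and `x·m = y·n`, also `x·m·a` is defined
and `x·(m a) = y·r`; likewise `z·(q b) = y·r`.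
-/

/-- A (partial, right) action `(X, P, T)` of a monoid `P` on a set `X`:
domains `U m ⊆ X` and maps `x · m := act x m` (only meaningful on `U m`) such that
`U e = X`, `x · e = x`, `x ∈ U (m n) ↔ (x ∈ U m ∧ x·m ∈ U n)`, and in that case
`(x·m)·n = x·(m n)`. -/
structure PartialAction (P : Type*) [Monoid P] (X : Type*) where
  U : P → Set X
  act : X → P → X
  U_one : U 1 = Set.univ
  act_one : ∀ x : X, act x 1 = x
  mem_U_mul : ∀ (x : X) (m n : P), x ∈ U (m * n) ↔ x ∈ U m ∧ act x m ∈ U n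
  act_mul : ∀ (x : X) (m n : P), x ∈ U (m * n) → act (act x m) n = act x (m * n)

/-- `m ≤ n` in `P` iff `n = m·p` for some `p ∈ P`. -/
def pLe {P : Type*} [Monoid P] (m n : P) : Prop := ∃ p : P, n = m * p

/-- The partial action is directed: whenever `U m ∩ U n ≠ ∅` there is an upper bound
`r` of `m` and `n` with `U m ∩ U n = U r`. -/
def PartialAction.IsDirectedAction {P : Type*} [Monoid P] {X : Type*}
    (A : PartialAction P X) : Prop :=
  ∀ m n : P, (A.U m ∩ A.U n).Nonempty →
    ∃ r : P, pLe m r ∧ pLe n r ∧ A.U m ∩ A.U n = A.U r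

namespace PartialAction

variable {P : Type*} [Monoid P] {X : Type*} (A : PartialAction P X)

def Rel (x y : X) : Prop :=
  ∃ m n : P, x ∈ A.U m ∧ y ∈ A.U n ∧ A.act x m = A.act y n

theorem mem_U_one (x : X) : x ∈ A.U 1 := A.U_one ▸ Set.mem_univ x

theorem mem_U_mul_and_act_mul_eq {x y : X} {m n : P} (hx : x ∈ A.U m)
    (hxy : A.act x m = A.act y n) {a : P} (hy : y ∈ A.U (n * a)) :
    x ∈ A.U (m * a) ∧ A.act x (m * a) = A.act y (n * a) := by
  have hxa : x ∈ A.U (m * a) :=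
    (A.mem_U_mul x m a).mpr ⟨hx, hxy ▸ ((A.mem_U_mul y n a).mp hy).2⟩
  refine ⟨hxa, ?_⟩
  rw [← A.act_mul x m a hxa, hxy, A.act_mul y n a hy]

theorem rel_refl (x : X) : A.Rel x x :=
  ⟨1, 1, A.mem_U_one x, A.mem_U_one x, rfl⟩

theorem rel_symm {x y : X} : A.Rel x y → A.Rel y x :=
  fun ⟨m, n, hx, hy, h⟩ => ⟨n, m, hy, hx, h.symm⟩

theorem rel_trans (hdir : A.IsDirectedAction) {x y z : X} :
    A.Rel x y → A.Rel y z → A.Rel x z := by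
  rintro ⟨m, n, hx, hyn, hxy⟩ ⟨p, q, hyp, hz, hyz⟩
  obtain ⟨r, ⟨a, rfl⟩, ⟨b, hr⟩, hU⟩ := hdir n p ⟨y, hyn, hyp⟩
  have hy : y ∈ A.U (n * a) := hU ▸ ⟨hyn, hyp⟩
  obtain ⟨hxa, hxa_eq⟩ := A.mem_U_mul_and_act_mul_eq hx hxy hy
  obtain ⟨hzb, hzb_eq⟩ := A.mem_U_mul_and_act_mul_eq hz hyz.symm (hr ▸ hy)
  exact ⟨m * a, q * b, hxa, hzb, by rw [hxa_eq, hzb_eq, hr]⟩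

theorem equivalence_rel (hdir : A.IsDirectedAction) : Equivalence A.Rel :=
  ⟨A.rel_refl, A.rel_symm, A.rel_trans hdir⟩

end PartialAction

/-- if the partial action `(X,P,T)` is directed then the relation
`x ∼ y ↔ ∃ m n ∈ P, x ∈ U m, y ∈ U n, x·m = y·n` is an equivalence relation on `X`. -/
theorem stmt3 {P : Type*} [Monoid P] {X : Type*} (A : PartialAction P X)
    (hdir : A.IsDirectedAction) :
    Equivalence (fun x y : X =>
      ∃ m n : P, x ∈ A.U m ∧ y ∈ A.U n ∧ A.act x m = A.act y n) :=
  A.equivalence_rel hdir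
end

section
/- Suppose the partial action (X,P,T) is directed and P is a submonoid of a group Q. Then the set G(X,P,T) = {(x,q,y) ∈ X × Q × X : ∃ m, n ∈ P, q = m·n⁻¹, x ∈ U(m), y ∈ U(n), x·m = y·n} is a subgroupoid of the trivial groupoid X × Q × X: (x,1,x) ∈ G(X,P,T) for every x ∈ X; if (x,q,y) ∈ G(X,P,T) then (y,q⁻¹,x) ∈ G(X,P,T); and if (x,s,y) ∈ G(X,P,T) and (y,t,z) ∈ G(X,P,T) then (x,s·t,z) ∈ G(X,P,T). -/
namespace PartialAction

variable {P : Type*} [Monoid P] {X : Type*} (A : PartialAction P X)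

theorem act_mem_U_of_mem_U_mul {x : X} {m p : P} (hx : x ∈ A.U (m * p)) : A.act x m ∈ A.U p :=
  ((A.mem_U_mul x m p).mp hx).2

theorem mem_U_mul_of_act_eq {x y : X} {m n p : P} (hx : x ∈ A.U m)
    (hxy : A.act x m = A.act y n) (hy : y ∈ A.U (n * p)) : x ∈ A.U (m * p) :=
  (A.mem_U_mul x m p).mpr ⟨hx, hxy ▸ A.act_mem_U_of_mem_U_mul hy⟩

theorem act_mul_eq_of_act_eq {x y : X} {m n p : P} (hx : x ∈ A.U m)
    (hxy : A.act x m = A.act y n) (hy : y ∈ A.U (n * p)) :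
    A.act x (m * p) = A.act y (n * p) := by
  rw [← A.act_mul x m p (A.mem_U_mul_of_act_eq hx hxy hy), hxy, A.act_mul y n p hy]

end PartialAction

theorem mul_inv_mul_mul_inv_eq_of_mul_eq {G : Type*} [Group G] {m n a b p c : G}
    (h : n * p = a * c) : m * n⁻¹ * (a * b⁻¹) = m * p * (b * c)⁻¹ := by
  obtain rfl : a = n * p * c⁻¹ := eq_mul_inv_of_mul_eq h.symm
  group

namespace PartialAction

variable {Q : Type*} [Group Q] {P : Submonoid Q} {X : Type*} (A : PartialAction P X)

/-- The paper's `G(X,P,T)`. -/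
def groupoid : Set (X × Q × X) :=
  {g | ∃ m n : P, g.2.1 = (m : Q) * (n : Q)⁻¹ ∧
    g.1 ∈ A.U m ∧ g.2.2 ∈ A.U n ∧ A.act g.1 m = A.act g.2.2 n}

theorem one_mem_groupoid (x : X) : (x, (1 : Q), x) ∈ A.groupoid :=
  ⟨1, 1, by simp, by simp [A.U_one], by simp [A.U_one], rfl⟩

theorem inv_mem_groupoid {x y : X} {q : Q} (h : (x, q, y) ∈ A.groupoid) :
    (y, q⁻¹, x) ∈ A.groupoid := by
  obtain ⟨m, n, (hq : q = _), hx, hy, hxy⟩ := h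
  exact ⟨n, m, by simp [hq], hy, hx, hxy.symm⟩

/-- For arrows `(x, m n⁻¹, y)` and `(y, a b⁻¹, z)`, directedness gives `r = n p = a c` with
`y ∈ U n ∩ U a = U r`; then `m p` and `b c` witness `(x, s t, z)`, both sides acting to `y · r`. -/
theorem mul_mem_groupoid (hdir : A.IsDirectedAction) {x y z : X} {s t : Q}
    (hs : (x, s, y) ∈ A.groupoid) (ht : (y, t, z) ∈ A.groupoid) :
    (x, s * t, z) ∈ A.groupoid := by
  obtain ⟨m, n, (hs : s = _), hx, hy, hxy⟩ := hs
  obtain ⟨a, b, (ht : t = _), hy', hz, hzy⟩ := ht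
  obtain ⟨r, ⟨p, rfl⟩, ⟨c, hc⟩, hU⟩ := hdir n a ⟨y, hy, hy'⟩
  have hyr : y ∈ A.U (n * p) := hU ▸ ⟨hy, hy'⟩
  have hyr' : y ∈ A.U (a * c) := hc ▸ hyr
  refine ⟨m * p, b * c, ?_, A.mem_U_mul_of_act_eq hx hxy hyr,
    A.mem_U_mul_of_act_eq hz hzy.symm hyr', ?_⟩
  · rw [hs, ht, Submonoid.coe_mul, Submonoid.coe_mul]
    exact mul_inv_mul_mul_inv_eq_of_mul_eq (congrArg Subtype.val hc)
  · rw [A.act_mul_eq_of_act_eq hx hxy hyr, A.act_mul_eq_of_act_eq hz hzy.symm hyr', hc]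

end PartialAction

/-- suppose the partial action `(X,P,T)` is directed and `P` is a
submonoid of a group `Q`.  Then
`G(X,P,T) = {(x,q,y) : ∃ m n ∈ P, q = m·n⁻¹, x ∈ U m, y ∈ U n, x·m = y·n}` is a
subgroupoid of the trivial groupoid `X × Q × X`: it contains `(x,1,x)` for all `x`,
is stable under the inverse `(x,q,y) ↦ (y,q⁻¹,x)` and under the product
`((x,s,y),(y,t,z)) ↦ (x,s·t,z)`. -/
theorem stmt4 {Q : Type*} [Group Q] (P : Submonoid Q) {X : Type*}
    (A : PartialAction P X) (hdir : A.IsDirectedAction) :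
    (∀ x : X, ((x, (1 : Q), x) : X × Q × X) ∈
        {g : X × Q × X | ∃ m n : P, g.2.1 = (m : Q) * (n : Q)⁻¹ ∧
          g.1 ∈ A.U m ∧ g.2.2 ∈ A.U n ∧ A.act g.1 m = A.act g.2.2 n}) ∧
    (∀ x y : X, ∀ q : Q, ((x, q, y) : X × Q × X) ∈
        {g : X × Q × X | ∃ m n : P, g.2.1 = (m : Q) * (n : Q)⁻¹ ∧
          g.1 ∈ A.U m ∧ g.2.2 ∈ A.U n ∧ A.act g.1 m = A.act g.2.2 n} →
      ((y, q⁻¹, x) : X × Q × X) ∈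
        {g : X × Q × X | ∃ m n : P, g.2.1 = (m : Q) * (n : Q)⁻¹ ∧
          g.1 ∈ A.U m ∧ g.2.2 ∈ A.U n ∧ A.act g.1 m = A.act g.2.2 n}) ∧
    (∀ x y z : X, ∀ s t : Q, ((x, s, y) : X × Q × X) ∈
        {g : X × Q × X | ∃ m n : P, g.2.1 = (m : Q) * (n : Q)⁻¹ ∧
          g.1 ∈ A.U m ∧ g.2.2 ∈ A.U n ∧ A.act g.1 m = A.act g.2.2 n} →
      ((y, t, z) : X × Q × X) ∈
        {g : X × Q × X | ∃ m n : P, g.2.1 = (m : Q) * (n : Q)⁻¹ ∧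
          g.1 ∈ A.U m ∧ g.2.2 ∈ A.U n ∧ A.act g.1 m = A.act g.2.2 n} →
      ((x, s * t, z) : X × Q × X) ∈
        {g : X × Q × X | ∃ m n : P, g.2.1 = (m : Q) * (n : Q)⁻¹ ∧
          g.1 ∈ A.U m ∧ g.2.2 ∈ A.U n ∧ A.act g.1 m = A.act g.2.2 n}) :=
  ⟨A.one_mem_groupoid, fun _ _ _ => A.inv_mem_groupoid, fun _ _ _ _ _ => A.mul_mem_groupoid hdir⟩
end

section
/- Suppose the partial action (X,P,T) is directed. Let 𝓕 be the collection of finite subsets F of P such that ⋂_{n ∈ F} U(n) ≠ ∅, with the convention that the empty intersection is X (so ∅ ∈ 𝓕 and every singleton is in 𝓕). Then there is a map F ↦ r_F from 𝓕 to P such that r_∅ = e, r_{ {n} } = n for every n ∈ P, and for all F ∈ 𝓕: (a) n ≤ r_F for every n ∈ F; (b) U(r_F) = ⋂_{n ∈ F} U(n); and (c) if F' ⊆ F (so F' ∈ 𝓕) then r_{F'} ≤ r_F. -/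
/-!
Directedness, applied repeatedly, gives every finite `M ⊆ P` with `⋂ m ∈ M, U m` nonempty a
common upper bound `t` with `U t = ⋂ m ∈ M, U m`. The map `F ↦ r_F` is built by strong
induction on `F`: for `G ⊂ F` one has `U r_G = ⋂ n ∈ G, U n ⊇ ⋂ n ∈ F, U n`, so adding the
earlier values `r_G` to `F` does not change the intersection, and a bound of the enlarged set
lies above all of them.
-/

theorem pLe_refl {P : Type*} [Monoid P] (m : P) : pLe m m := ⟨1, (mul_one m).symm⟩

theorem pLe_trans {P : Type*} [Monoid P] {a b c : P} (hab : pLe a b) (hbc : pLe b c) :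
    pLe a c := by
  obtain ⟨p, rfl⟩ := hab
  obtain ⟨q, rfl⟩ := hbc
  exact ⟨p * q, mul_assoc a p q⟩

theorem one_pLe {P : Type*} [Monoid P] (m : P) : pLe 1 m := ⟨m, (one_mul m).symm⟩

namespace PartialAction

variable {P : Type*} [Monoid P] {X : Type*} (A : PartialAction P X)

theorem biInter_U_anti {F' F : Finset P} (h : F' ⊆ F) :
    ⋂ n ∈ F, A.U n ⊆ ⋂ n ∈ F', A.U n :=
  Set.subset_iInter₂ fun _ hn => Set.biInter_subset_of_mem (h hn)

variable {A}

theorem IsDirectedAction.exists_pLe_U_eq_biInter (hdir : A.IsDirectedAction) (M : Finset P)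
    (hM : (⋂ m ∈ M, A.U m).Nonempty) :
    ∃ t, (∀ m ∈ M, pLe m t) ∧ A.U t = ⋂ m ∈ M, A.U m := by
  classical
  induction M using Finset.induction_on with
  | empty => exact ⟨1, by simp, by simp [A.U_one]⟩
  | insert a M _ ih =>
    rw [Finset.set_biInter_insert] at hM ⊢
    obtain ⟨t, hMt, hUt⟩ := ih (hM.mono Set.inter_subset_right)
    obtain ⟨s, has, hts, hUs⟩ := hdir a t (by rwa [hUt])
    refine ⟨s, fun m hm => ?_, by rw [← hUs, hUt]⟩
    rcases Finset.mem_insert.1 hm with rfl | hm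
    · exact has
    · exact pLe_trans (hMt m hm) hts

variable (A)

open Classical in
/-- The filter makes the intersection of the domains equal to `⋂ n ∈ F, U n` whatever `V` is;
in the recursion, `V` holds the values `r_G`, `G ⊂ F`, which all pass it. -/
noncomputable def boundTargets (F V : Finset P) : Finset P :=
  F ∪ V.filter fun m => ⋂ n ∈ F, A.U n ⊆ A.U m

theorem biInter_boundTargets (F V : Finset P) :
    ⋂ m ∈ A.boundTargets F V, A.U m = ⋂ n ∈ F, A.U n := by
  classical
  refine (A.biInter_U_anti Finset.subset_union_left).antisymm ?_
  refine Set.subset_iInter₂ fun m hm => ?_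
  rcases Finset.mem_union.1 hm with hm | hm
  · exact Set.biInter_subset_of_mem hm
  · exact (Finset.mem_filter.1 hm).2

noncomputable def chooseBound (F V : Finset P) : P :=
  Classical.epsilon fun t => (∀ m ∈ A.boundTargets F V, pLe m t) ∧ A.U t = ⋂ n ∈ F, A.U n

variable {A}

theorem IsDirectedAction.chooseBound_spec (hdir : A.IsDirectedAction) {F : Finset P}
    (hF : (⋂ n ∈ F, A.U n).Nonempty) (V : Finset P) :
    (∀ m ∈ A.boundTargets F V, pLe m (A.chooseBound F V)) ∧
      A.U (A.chooseBound F V) = ⋂ n ∈ F, A.U n := by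
  have hex : ∃ t, (∀ m ∈ A.boundTargets F V, pLe m t) ∧ A.U t = ⋂ n ∈ F, A.U n := by
    rw [← A.biInter_boundTargets F V] at hF ⊢
    exact hdir.exists_pLe_U_eq_biInter _ hF
  exact Classical.epsilon_spec hex

variable (A)

open Classical in
noncomputable def recBound : Finset P → P :=
  Finset.strongInduction fun F ih =>
    A.chooseBound F (F.ssubsets.image fun G => if hG : G ⊂ F then ih G hG else 1)

open Classical in
theorem recBound_eq (F : Finset P) :
    A.recBound F = A.chooseBound F (F.ssubsets.image A.recBound) := by
  rw [recBound, Finset.strongInduction_eq]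
  congr 1
  refine Finset.image_congr fun G hG => ?_
  rw [dif_pos (Finset.mem_ssubsets.1 hG)]

variable {A}

theorem IsDirectedAction.recBound_spec (hdir : A.IsDirectedAction) (F : Finset P)
    (hF : (⋂ n ∈ F, A.U n).Nonempty) :
    (∀ n ∈ F, pLe n (A.recBound F)) ∧ A.U (A.recBound F) = ⋂ n ∈ F, A.U n ∧
      ∀ G ⊂ F, pLe (A.recBound G) (A.recBound F) := by
  classical
  induction F using Finset.strongInduction with
  | H F ih =>
    obtain ⟨hle, hU⟩ := hdir.chooseBound_spec hF (F.ssubsets.image A.recBound)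
    rw [← recBound_eq] at hle hU
    refine ⟨fun n hn => hle n (Finset.mem_union_left _ hn), hU, fun G hG => hle _ ?_⟩
    have hUG := (ih G hG (hF.mono (A.biInter_U_anti hG.subset))).2.1
    refine Finset.mem_union_right _ (Finset.mem_filter.2 ⟨?_, ?_⟩)
    · exact Finset.mem_image_of_mem _ (Finset.mem_ssubsets.2 hG)
    · exact hUG ▸ A.biInter_U_anti hG.subset

variable (A)

open Classical in
/-- The recursion need not produce `1` at `∅` nor `n` at `{n}`, so these values are imposed;
this is harmless since `1 ≤ r` for every `r` and `n ≤ r_F` whenever `n ∈ F`. -/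
noncomputable def bound (F : Finset P) : P :=
  if h : ∃ n, F = {n} then h.choose else if F = ∅ then 1 else A.recBound F

theorem bound_empty : A.bound ∅ = 1 := by
  simp [bound]

theorem bound_singleton (n : P) : A.bound {n} = n := by
  have h : ∃ m, ({n} : Finset P) = {m} := ⟨n, rfl⟩
  rw [bound, dif_pos h]
  exact (Finset.singleton_injective h.choose_spec).symm

theorem bound_of_nontrivial {F : Finset P} (hF : F.Nontrivial) : A.bound F = A.recBound F := by
  rw [bound, dif_neg (Finset.not_nontrivial_singleton <| ·.choose_spec ▸ hF),
    if_neg hF.nonempty.ne_empty]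

variable {A}

theorem IsDirectedAction.bound_spec (hdir : A.IsDirectedAction) (F : Finset P)
    (hF : (⋂ n ∈ F, A.U n).Nonempty) :
    (∀ n ∈ F, pLe n (A.bound F)) ∧ A.U (A.bound F) = ⋂ n ∈ F, A.U n ∧
      ∀ G ⊂ F, pLe (A.bound G) (A.bound F) := by
  rcases F.eq_empty_or_nonempty with rfl | hne
  · simp [bound_empty, A.U_one]
  rcases hne.exists_eq_singleton_or_nontrivial with ⟨a, rfl⟩ | hnt
  · refine ⟨by simp [bound_singleton, pLe_refl], by simp [bound_singleton], fun G hG => ?_⟩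
    rw [Finset.ssubset_singleton_iff.1 hG, bound_empty]
    exact one_pLe _
  obtain ⟨hle, hU, hmono⟩ := hdir.recBound_spec F hF
  rw [bound_of_nontrivial A hnt]
  refine ⟨hle, hU, fun G hG => ?_⟩
  rcases G.eq_empty_or_nonempty with rfl | hGne
  · rw [bound_empty]
    exact one_pLe _
  rcases hGne.exists_eq_singleton_or_nontrivial with ⟨n, rfl⟩ | hGnt
  · rw [bound_singleton]
    exact hle n (Finset.singleton_subset_iff.1 hG.subset)
  · rw [bound_of_nontrivial A hGnt]
    exact hmono G hG

end PartialAction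

/-- suppose the partial action `(X,P,T)` is directed.  Let `𝓕` be the
collection of finite `F ⊆ P` with `⋂_{n ∈ F} U n ≠ ∅` (the empty intersection being
`X`).  There is a map `F ↦ r_F` into `P` with `r_∅ = e`, `r_{{n}} = n` for every
`n ∈ P`, and for all `F ∈ 𝓕`: (a) `n ≤ r_F` for every `n ∈ F`;
(b) `U (r_F) = ⋂_{n ∈ F} U n`; (c) if `F' ⊆ F` then `r_{F'} ≤ r_F`. -/
theorem stmt7 {P : Type*} [Monoid P] {X : Type*} (A : PartialAction P X)
    (hdir : A.IsDirectedAction) :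
    ∃ r : Finset P → P,
      r ∅ = 1 ∧
      (∀ n : P, r {n} = n) ∧
      ∀ F : Finset P, (⋂ n ∈ F, A.U n).Nonempty →
        (∀ n ∈ F, pLe n (r F)) ∧
        A.U (r F) = (⋂ n ∈ F, A.U n) ∧
        (∀ F' : Finset P, F' ⊆ F → pLe (r F') (r F)) := by
  refine ⟨A.bound, A.bound_empty, A.bound_singleton, fun F hF => ?_⟩
  obtain ⟨hle, hU, hmono⟩ := hdir.bound_spec F hF
  refine ⟨hle, hU, fun F' hF' => ?_⟩
  rcases hF'.eq_or_ssubset with rfl | hss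
  · exact pLe_refl _
  · exact hmono F' hss
end

section
/- Let A be a set of morphisms of a P-graph Λ and n ∈ P, and define A·n = {ν : ∃ μ with d(μ) = n such that μν ∈ A}. If A is hereditary, then A·n is hereditary; if A is hereditary and directed, then A·n is directed. -/
open CategoryTheory

/-- A `P`-graph: a small category `Λ` with a degree functor `d` into a submonoid `P`
of a group `Q`, satisfying `d (f ≫ g) = d f * d g`, `d (𝟙 x) = 1`, and the unique
factorization property. -/
structure PGraph {Q : Type*} [Group Q] (P : Submonoid Q) (Λ : Type*) [Category Λ] where
  d : ∀ {x y : Λ}, (x ⟶ y) → Q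
  d_mem : ∀ {x y : Λ} (f : x ⟶ y), d f ∈ P
  d_comp : ∀ {x y z : Λ} (f : x ⟶ y) (g : y ⟶ z), d (f ≫ g) = d f * d g
  d_id : ∀ x : Λ, d (𝟙 x) = 1
  factor : ∀ {x z : Λ} (l : x ⟶ z) (m n : Q), m ∈ P → n ∈ P → d l = m * n →
    ∃! p : Σ y : Λ, (x ⟶ y) × (y ⟶ z),
      d p.2.1 = m ∧ d p.2.2 = n ∧ p.2.1 ≫ p.2.2 = l

/-- The prefix order on the morphisms of `Λ` (packaged as triples
`⟨source, target, morphism⟩`): `μ ≤ λ` iff there is `ν` with `λ = μ ≫ ν`. -/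
def prefixLe {Λ : Type*} [Category Λ] (f g : Σ x y : Λ, x ⟶ y) : Prop :=
  ∃ (z : Λ) (ν : f.2.1 ⟶ z), g = ⟨f.1, z, f.2.2 ≫ ν⟩

/-- A set `A` of morphisms is hereditary if `μ ≤ λ ∈ A` implies `μ ∈ A`. -/
def Hereditary {Λ : Type*} [Category Λ] (A : Set (Σ x y : Λ, x ⟶ y)) : Prop :=
  ∀ f g : Σ x y : Λ, x ⟶ y, prefixLe f g → g ∈ A → f ∈ A

/-- A set `A` of morphisms is directed if any two of its elements have a common upper
bound (for the prefix order) lying in `A`. -/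
def DirectedSet {Λ : Type*} [Category Λ] (A : Set (Σ x y : Λ, x ⟶ y)) : Prop :=
  ∀ f ∈ A, ∀ g ∈ A, ∃ h ∈ A, prefixLe f h ∧ prefixLe g h

/-- `A·n = {ν : ∃ μ with d μ = n and μν ∈ A}`. -/
def shiftSet {Q : Type*} [Group Q] {P : Submonoid Q} {Λ : Type*} [Category Λ]
    (G : PGraph P Λ) (A : Set (Σ x y : Λ, x ⟶ y)) (n : Q) : Set (Σ x y : Λ, x ⟶ y) :=
  {g : Σ x y : Λ, x ⟶ y | ∃ (w : Λ) (μ : w ⟶ g.1),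
    G.d μ = n ∧ (⟨w, g.2.1, μ ≫ g.2.2⟩ : Σ x y : Λ, x ⟶ y) ∈ A}

/-! Heredity passes to `A·n` by associativity. For directedness, a common upper bound
`μ₁ φ ν₁ = μ₂ ψ ν₂ ∈ A` of `μ₁ φ` and `μ₂ ψ` has, by unique factorization, a single
initial segment `μ₁ = μ₂` of degree `n`; cutting it off gives a common upper bound of
`φ` and `ψ` in `A·n`. -/

section

variable {Q : Type*} [Group Q] {P : Submonoid Q} {Λ : Type*} [Category Λ]

namespace PGraph

theorem d_cancel_left (G : PGraph P Λ) {w y₁ y₂ z : Λ} {μ₁ : w ⟶ y₁} {α : y₁ ⟶ z}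
    {μ₂ : w ⟶ y₂} {β : y₂ ⟶ z} (hd : G.d μ₁ = G.d μ₂) (h : μ₁ ≫ α = μ₂ ≫ β) :
    G.d α = G.d β :=
  mul_left_cancel (a := G.d μ₁) <| by rw [← G.d_comp, h, G.d_comp, hd]

theorem factorization_eq (G : PGraph P Λ) {w y₁ y₂ z : Λ} {μ₁ : w ⟶ y₁} {α : y₁ ⟶ z}
    {μ₂ : w ⟶ y₂} {β : y₂ ⟶ z} (hd : G.d μ₁ = G.d μ₂) (h : μ₁ ≫ α = μ₂ ≫ β) :
    (⟨y₁, μ₁, α⟩ : Σ y : Λ, (w ⟶ y) × (y ⟶ z)) = ⟨y₂, μ₂, β⟩ := by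
  obtain ⟨_, _, unique⟩ :=
    G.factor (μ₁ ≫ α) (G.d μ₁) (G.d α) (G.d_mem μ₁) (G.d_mem α) (G.d_comp μ₁ α)
  exact (unique _ ⟨rfl, rfl, rfl⟩).trans
    (unique _ ⟨hd.symm, (G.d_cancel_left hd h).symm, h.symm⟩).symm

end PGraph

theorem Hereditary.shiftSet {A : Set (Σ x y : Λ, x ⟶ y)} (hA : Hereditary A)
    (G : PGraph P Λ) (n : Q) : Hereditary (shiftSet G A n) := by
  rintro ⟨x, y, φ⟩ _ ⟨z, ν, rfl⟩ ⟨w, μ, hdμ, hμA⟩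
  refine ⟨w, μ, hdμ, hA _ _ ⟨z, ν, ?_⟩ hμA⟩
  simp

theorem DirectedSet.shiftSet {A : Set (Σ x y : Λ, x ⟶ y)} (hD : DirectedSet A)
    (G : PGraph P Λ) (n : Q) : DirectedSet (shiftSet G A n) := by
  rintro ⟨x₁, y₁, φ⟩ ⟨w, μ₁, hd₁, h₁A⟩ ⟨x₂, y₂, ψ⟩ ⟨w₂, μ₂, hd₂, h₂A⟩
  obtain ⟨_, hA, ⟨z, ν₁, rfl⟩, ⟨z₂, ν₂, hbound⟩⟩ := hD _ h₁A _ h₂A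
  obtain ⟨rfl, hbound⟩ := Sigma.mk.inj_iff.mp hbound
  obtain ⟨rfl, hbound⟩ := Sigma.mk.inj_iff.mp (eq_of_heq hbound)
  have hcomp : μ₁ ≫ φ ≫ ν₁ = μ₂ ≫ ψ ≫ ν₂ := by simpa using eq_of_heq hbound
  obtain ⟨rfl, hfac⟩ := Sigma.mk.inj_iff.mp (G.factorization_eq (hd₁.trans hd₂.symm) hcomp)
  obtain ⟨rfl, htail⟩ := Prod.mk.inj (eq_of_heq hfac)
  refine ⟨⟨x₁, z, φ ≫ ν₁⟩, ⟨w, μ₁, hd₁, by simpa using hA⟩, ⟨z, ν₁, rfl⟩, ⟨z, ν₂, ?_⟩⟩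
  rw [htail]

end

theorem stmt13_general {Q : Type*} [Group Q] (P : Submonoid Q) {Λ : Type*} [SmallCategory Λ]
    (G : PGraph P Λ) (A : Set (Σ x y : Λ, x ⟶ y)) (n : Q) :
    (Hereditary A → Hereditary (shiftSet G A n)) ∧
    (Hereditary A → DirectedSet A → DirectedSet (shiftSet G A n)) :=
  ⟨fun hA => hA.shiftSet G n, fun _ hD => hD.shiftSet G n⟩

/-- for a set `A` of morphisms of a `P`-graph and `n ∈ P`: if `A` is
hereditary then `A·n` is hereditary, and if `A` is hereditary and directed then `A·n`
is directed. -/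
theorem stmt13 {Q : Type*} [Group Q] (P : Submonoid Q) {Λ : Type*} [SmallCategory Λ]
    (G : PGraph P Λ) (A : Set (Σ x y : Λ, x ⟶ y)) (n : Q) (hn : n ∈ P) :
    (Hereditary A → Hereditary (shiftSet G A n)) ∧
    (Hereditary A → DirectedSet A → DirectedSet (shiftSet G A n)) :=
  stmt13_general P G A n
end

section
/- Let A be a hereditary and directed set of morphisms of a P-graph Λ and let n ∈ P be such that A·n ≠ ∅. Then there is a unique morphism μ ∈ A with d(μ) = n, and for this μ one has A = μ(A·n), where μB := {λ : ∃ ν ∈ B composable with μ, λ ≤ μν}. -/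
open CategoryTheory

/-- `μB = {λ : ∃ ν ∈ B composable with μ, λ ≤ μν}`. -/
def mulSet {Λ : Type*} [Category Λ] (μ : Σ x y : Λ, x ⟶ y)
    (B : Set (Σ x y : Λ, x ⟶ y)) : Set (Σ x y : Λ, x ⟶ y) :=
  {f : Σ x y : Λ, x ⟶ y | ∃ (z : Λ) (ν : μ.2.1 ⟶ z),
    (⟨μ.2.1, z, ν⟩ : Σ x y : Λ, x ⟶ y) ∈ B ∧
    prefixLe f ⟨μ.1, z, μ.2.2 ≫ ν⟩}

/-!
Directedness makes the elements of `A` pairwise comparable up to a common extension, and by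
unique factorization two prefixes of one morphism with the same degree coincide; so `A` has
at most one element of degree `n`. A witness `ν ∈ A·n`, i.e. `μν ∈ A` with `d μ = n`, provides
one: `μ ∈ A` by heredity.
Every element of `A` lies below a common extension `μν ∈ A` of itself and `μ`, and
conversely any `μ'ν ∈ A` with `d μ' = n` has `μ' ∈ A`, hence `μ' = μ`.
-/

namespace PGraph

variable {Q : Type*} [Group Q] {P : Submonoid Q} {Λ : Type*} [Category Λ] (G : PGraph P Λ)

theorem sigma_eq_of_comp_eq_of_d_eq {x y y' z : Λ} {φ : x ⟶ y} {ψ : x ⟶ y'}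
    {ν : y ⟶ z} {ν' : y' ⟶ z} (h : φ ≫ ν = ψ ≫ ν') (hd : G.d φ = G.d ψ) :
    (⟨y, φ⟩ : Σ y, x ⟶ y) = ⟨y', ψ⟩ := by
  have hdν : G.d ν' = G.d ν := by
    apply mul_left_cancel (a := G.d φ)
    rw [← G.d_comp, hd, ← G.d_comp, h]
  have hfac := G.factor (φ ≫ ν) (G.d φ) (G.d ν) (G.d_mem φ) (G.d_mem ν) (G.d_comp φ ν)
  have := hfac.unique (y₁ := ⟨y, φ, ν⟩) (y₂ := ⟨y', ψ, ν'⟩) ⟨rfl, rfl, rfl⟩ ⟨hd.symm, hdν, h.symm⟩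
  cases this
  rfl

theorem eq_of_prefixLe_of_d_eq {f g h : Σ x y : Λ, x ⟶ y} (hf : prefixLe f h)
    (hg : prefixLe g h) (hd : G.d f.2.2 = G.d g.2.2) : f = g := by
  obtain ⟨a, b, φ⟩ := f
  obtain ⟨a', b', ψ⟩ := g
  obtain ⟨z, ν, rfl⟩ := hf
  obtain ⟨z', ν', hh⟩ := hg
  simp only [Sigma.mk.injEq] at hh
  obtain ⟨rfl, hh⟩ := hh
  obtain ⟨rfl, hh⟩ := Sigma.mk.inj_iff.mp (eq_of_heq hh)
  cases G.sigma_eq_of_comp_eq_of_d_eq (eq_of_heq hh) hd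
  rfl

theorem eq_of_mem_of_d_eq {A : Set (Σ x y : Λ, x ⟶ y)} (hdir : DirectedSet A)
    {f g : Σ x y : Λ, x ⟶ y} (hf : f ∈ A) (hg : g ∈ A) (hd : G.d f.2.2 = G.d g.2.2) :
    f = g := by
  obtain ⟨h, -, hfh, hgh⟩ := hdir f hf g hg
  exact G.eq_of_prefixLe_of_d_eq hfh hgh hd

end PGraph

section

variable {Λ : Type*} [Category Λ] {A : Set (Σ x y : Λ, x ⟶ y)}

theorem prefixLe_mk_comp {x y z : Λ} (μ : x ⟶ y) (ν : y ⟶ z) :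
    prefixLe ⟨x, y, μ⟩ ⟨x, z, μ ≫ ν⟩ :=
  ⟨z, ν, rfl⟩

variable {Q : Type*} [Group Q] {P : Submonoid Q} (G : PGraph P Λ)

theorem subset_mulSet_shiftSet (hdir : DirectedSet A) {μ : Σ x y : Λ, x ⟶ y} (hμ : μ ∈ A)
    {n : Q} (hdμ : G.d μ.2.2 = n) : A ⊆ mulSet μ (shiftSet G A n) := by
  intro f hf
  obtain ⟨h, hh, hfh, z, ν, rfl⟩ := hdir f hf μ hμ
  exact ⟨z, ν, ⟨μ.1, μ.2.2, hdμ, hh⟩, hfh⟩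

theorem mulSet_shiftSet_subset (hher : Hereditary A) (hdir : DirectedSet A)
    {μ : Σ x y : Λ, x ⟶ y} (hμ : μ ∈ A) {n : Q} (hdμ : G.d μ.2.2 = n) :
    mulSet μ (shiftSet G A n) ⊆ A := by
  obtain ⟨w, y, μ⟩ := μ
  rintro f ⟨z, ν, ⟨w', μ', hdμ', hμ'ν⟩, hle⟩
  have hμ' : (⟨w', y, μ'⟩ : Σ x y : Λ, x ⟶ y) ∈ A := hher _ _ (prefixLe_mk_comp μ' ν) hμ'ν
  cases G.eq_of_mem_of_d_eq hdir hμ' hμ (hdμ'.trans hdμ.symm)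
  exact hher _ _ hle hμ'ν

end

theorem stmt14_general {Q : Type*} [Group Q] (P : Submonoid Q) {Λ : Type*} [SmallCategory Λ]
    (G : PGraph P Λ) (A : Set (Σ x y : Λ, x ⟶ y))
    (hher : Hereditary A) (hdir : DirectedSet A)
    (n : Q) (hne : (shiftSet G A n).Nonempty) :
    ∃ μ : Σ x y : Λ, x ⟶ y,
      (μ ∈ A ∧ G.d μ.2.2 = n) ∧
      (∀ μ' : Σ x y : Λ, x ⟶ y, μ' ∈ A → G.d μ'.2.2 = n → μ' = μ) ∧
      A = mulSet μ (shiftSet G A n) := by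
  obtain ⟨⟨y, z, ν⟩, w, μ, hdμ, hμν⟩ := hne
  have hμ : (⟨w, y, μ⟩ : Σ x y : Λ, x ⟶ y) ∈ A := hher _ _ (prefixLe_mk_comp μ ν) hμν
  refine ⟨⟨w, y, μ⟩, ⟨hμ, hdμ⟩, fun μ' hμ' hdμ' => ?_, ?_⟩
  · exact G.eq_of_mem_of_d_eq hdir hμ' hμ (hdμ'.trans hdμ.symm)
  · exact (subset_mulSet_shiftSet G hdir hμ hdμ).antisymm
      (mulSet_shiftSet_subset G hher hdir hμ hdμ)

/-- let `A` be a hereditary and directed set of morphisms of a `P`-graph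
and `n ∈ P` with `A·n ≠ ∅`.  Then there is a unique morphism `μ ∈ A` with `d μ = n`,
and for this `μ` one has `A = μ(A·n)`. -/
theorem stmt14 {Q : Type*} [Group Q] (P : Submonoid Q) {Λ : Type*} [SmallCategory Λ]
    (G : PGraph P Λ) (A : Set (Σ x y : Λ, x ⟶ y))
    (hher : Hereditary A) (hdir : DirectedSet A)
    (n : Q) (hn : n ∈ P) (hne : (shiftSet G A n).Nonempty) :
    ∃ μ : Σ x y : Λ, x ⟶ y,
      (μ ∈ A ∧ G.d μ.2.2 = n) ∧
      (∀ μ' : Σ x y : Λ, x ⟶ y, μ' ∈ A → G.d μ'.2.2 = n → μ' = μ) ∧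
      A = mulSet μ (shiftSet G A n) :=
  stmt14_general P G A hher hdir n hne
end

section
/- Let P be a quasi-lattice ordered submonoid of a group Q. Then the set of all A : P → Bool such that {p ∈ P : A(p) = true} is hereditary (p ≤ q and A(q) = true imply A(p) = true) and directed (A(p) = A(q) = true implies there is r with A(r) = true, p ≤ r and q ≤ r) is a closed subset of the space P → Bool equipped with the product topology (Bool discrete). (This is the discrete case, Λ = P, of the statement that the set of closed hereditary directed subsets of a P-graph is closed in the Fell topology; it is Nica's description of the Wiener–Hopf compactification.) -/
/-!
Heredity is a conjunction of conditions on two coordinates each, hence closed. Directedness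
is not, because of the existential quantifier, but least upper bounds remove it: for a
hereditary support, `p` and `q` have an upper bound in the support iff they have a common upper
bound at all and their least upper bound lies in the support.
-/

section

variable {α : Type*} (r : α → α → Prop)

def IsHereditary (A : α → Bool) : Prop := ∀ p q, r p q → A q = true → A p = true

lemma isClopen_setOf_apply_eq_true (p : α) : IsClopen {A : α → Bool | A p = true} :=
  (isClopen_discrete ({true} : Set Bool)).preimage (continuous_apply p)

lemma isClosed_setOf_isHereditary : IsClosed {A : α → Bool | IsHereditary r A} := by
  simp only [IsHereditary, Set.ofPred_forall]
  exact isClosed_iInter fun p => isClosed_iInter fun q => isClosed_iInter fun _ =>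
    isClosed_imp (isClopen_setOf_apply_eq_true q).isOpen (isClopen_setOf_apply_eq_true p).isClosed

lemma exists_isClosed_iff_exists_upperBound_mem_support
    (hlub : ∀ p q, (∃ u, r p u ∧ r q u) → ∃ l, r p l ∧ r q l ∧ ∀ u, r p u → r q u → r l u)
    (p q : α) :
    ∃ K : Set (α → Bool), IsClosed K ∧
      ∀ A, IsHereditary r A → ((∃ z, A z = true ∧ r p z ∧ r q z) ↔ A ∈ K) := by
  by_cases hbdd : ∃ u, r p u ∧ r q u
  · obtain ⟨l, hpl, hql, hl⟩ := hlub p q hbdd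
    exact ⟨_, (isClopen_setOf_apply_eq_true l).isClosed, fun A hA =>
      ⟨fun ⟨z, hz, hpz, hqz⟩ => hA l z (hl z hpz hqz) hz, fun hAl => ⟨l, hAl, hpl, hql⟩⟩⟩
  · exact ⟨∅, isClosed_empty, fun A _ =>
      iff_false_intro fun ⟨z, _, hpz, hqz⟩ => hbdd ⟨z, hpz, hqz⟩⟩

theorem isClosed_setOf_isHereditary_and_directed
    (hlub : ∀ p q, (∃ u, r p u ∧ r q u) → ∃ l, r p l ∧ r q l ∧ ∀ u, r p u → r q u → r l u) :
    IsClosed {A : α → Bool | IsHereditary r A ∧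
      ∀ p q, A p = true → A q = true → ∃ z, A z = true ∧ r p z ∧ r q z} := by
  choose K hK hAK using exists_isClosed_iff_exists_upperBound_mem_support r hlub
  have hset : {A : α → Bool | IsHereditary r A ∧
      ∀ p q, A p = true → A q = true → ∃ z, A z = true ∧ r p z ∧ r q z} =
      {A | IsHereditary r A} ∩ ⋂ p, ⋂ q, {A | A p = true → A q = true → A ∈ K p q} := by
    ext A
    simp only [Set.mem_ofPred_eq, Set.mem_inter_iff, Set.mem_iInter]
    refine and_congr_right fun hA => forall_congr' fun p => forall_congr' fun q => ?_
    exact imp_congr_right fun _ => imp_congr_right fun _ => hAK p q A hA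
  rw [hset]
  exact (isClosed_setOf_isHereditary r).inter <| isClosed_iInter fun p => isClosed_iInter fun q =>
    isClosed_imp (isClopen_setOf_apply_eq_true p).isOpen <|
      isClosed_imp (isClopen_setOf_apply_eq_true q).isOpen (hK p q)

end

theorem stmt17_general {Q : Type*} [Group Q] (P : Submonoid Q)
    (hQL2 : ∀ p q : P, (∃ u : P, (∃ s : P, u = p * s) ∧ (∃ s : P, u = q * s)) →
      ∃ l : P, (∃ s : P, l = p * s) ∧ (∃ s : P, l = q * s) ∧
        ∀ u : P, (∃ s : P, u = p * s) → (∃ s : P, u = q * s) → ∃ s : P, u = l * s) :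
    IsClosed {A : P → Bool |
      (∀ p q : P, (∃ s : P, q = p * s) → A q = true → A p = true) ∧
      (∀ p q : P, A p = true → A q = true →
        ∃ r : P, A r = true ∧ (∃ s : P, r = p * s) ∧ (∃ s : P, r = q * s))} :=
  isClosed_setOf_isHereditary_and_directed (fun p q => ∃ s : P, q = p * s) hQL2

/-- let `P` be a quasi-lattice ordered submonoid of a group `Q`
(`P ∩ P⁻¹ = {1}`, and any two elements of `P` with a common upper bound for
`p ≤ q ↔ ∃ s ∈ P, q = p s` have a least upper bound).  Then the set of `A : P → Bool`
whose support `{p : A p = true}` is hereditary and directed is closed in `P → Bool`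
with the product topology (`Bool` discrete). -/
theorem stmt17 {Q : Type*} [Group Q] (P : Submonoid Q)
    (hQL1 : ∀ q : Q, q ∈ P → q⁻¹ ∈ P → q = 1)
    (hQL2 : ∀ p q : P, (∃ u : P, (∃ s : P, u = p * s) ∧ (∃ s : P, u = q * s)) →
      ∃ l : P, (∃ s : P, l = p * s) ∧ (∃ s : P, l = q * s) ∧
        ∀ u : P, (∃ s : P, u = p * s) → (∃ s : P, u = q * s) → ∃ s : P, u = l * s) :
    IsClosed {A : P → Bool |
      (∀ p q : P, (∃ s : P, q = p * s) → A q = true → A p = true) ∧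
      (∀ p q : P, A p = true → A q = true →
        ∃ r : P, A r = true ∧ (∃ s : P, r = p * s) ∧ (∃ s : P, r = q * s))} :=
  stmt17_general P hQL2
end

section
/- Let P be a quasi-lattice ordered submonoid of a group Q. For m ∈ P let χ_{[1,m]} : P → Bool be the characteristic function of the segment [1,m] = {p ∈ P : p ≤ m}. Then the closure of {χ_{[1,m]} : m ∈ P} in the space P → Bool (product topology, Bool discrete) is exactly the set of characteristic functions of nonempty hereditary directed subsets of P. (This identifies Nica's Wiener–Hopf compactification Ω(P), and is the discrete case Λ = P of the density of F(Λ) in the path space.) -/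
/-!
Write `p ≤ q` as divisibility `p ∣ q` in the monoid `P`. Since `Bool` is discrete, `f` lies in the
closure of the segment indicators iff on every finite set it agrees with the indicator of some
segment `{p | p ∣ m}`. Such an `f` is nonempty and hereditary because segments are; it is directed
because if `f p` and `f q` hold then `p` and `q` have a common multiple, hence a least common
multiple `l`, which divides every common multiple and so lies in every segment approximating `f`
on `{p, q, l}`. Conversely, a nonempty directed set contains a common multiple `m` of its elements
in a given finite set, and if it is hereditary it agrees there with the segment below `m`.
-/

theorem mem_closure_iff_forall_finset_exists_eqOn {X Y : Type*} [TopologicalSpace Y]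
    [DiscreteTopology Y] {S : Set (X → Y)} {f : X → Y} :
    f ∈ closure S ↔ ∀ I : Finset X, ∃ g ∈ S, ∀ x ∈ I, g x = f x := by
  rw [mem_closure_iff]
  constructor
  · intro h I
    obtain ⟨g, hgI, hgS⟩ := h _ (isOpen_set_pi I.finite_toSet fun _ _ => isOpen_discrete _)
      (fun x _ => Set.mem_singleton (f x))
    exact ⟨g, hgS, hgI⟩
  · intro h o ho hfo
    obtain ⟨I, u, hu, hIu⟩ := isOpen_pi_iff.mp ho f hfo
    obtain ⟨g, hgS, hgI⟩ := h I
    exact ⟨g, hIu fun x hx => (hgI x hx).symm ▸ (hu x hx).2, hgS⟩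

section Segments

variable {M : Type*} [Monoid M]

def SegmentApproximable (f : M → Bool) : Prop :=
  ∀ I : Finset M, ∃ m : M, ∀ p ∈ I, f p = true ↔ p ∣ m

theorem mem_closure_segments_iff {f : M → Bool} :
    f ∈ closure {g : M → Bool | ∃ m : M, ∀ p, g p = true ↔ p ∣ m} ↔ SegmentApproximable f := by
  classical
  rw [mem_closure_iff_forall_finset_exists_eqOn]
  refine forall_congr' fun I => ⟨?_, ?_⟩
  · rintro ⟨g, ⟨m, hm⟩, hgf⟩
    exact ⟨m, fun p hp => hgf p hp ▸ hm p⟩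
  · rintro ⟨m, hm⟩
    exact ⟨fun p => decide (p ∣ m), ⟨m, fun p => decide_eq_true_iff⟩,
      fun p hp => Bool.eq_iff_iff.mpr (decide_eq_true_iff.trans (hm p hp).symm)⟩

namespace SegmentApproximable

variable {f : M → Bool}

theorem exists_eq_true (hf : SegmentApproximable f) : ∃ p, f p = true := by
  obtain ⟨m, hm⟩ := hf {1}
  exact ⟨1, (hm 1 (Finset.mem_singleton_self 1)).mpr (one_dvd m)⟩

theorem of_dvd (hf : SegmentApproximable f) {p q : M} (hpq : p ∣ q) (hq : f q = true) :
    f p = true := by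
  classical
  obtain ⟨m, hm⟩ := hf {p, q}
  exact (hm p (by simp)).mpr (hpq.trans ((hm q (by simp)).mp hq))

theorem directedOn (hlcm : ∀ p q : M, (∃ u, p ∣ u ∧ q ∣ u) →
      ∃ l, p ∣ l ∧ q ∣ l ∧ ∀ u, p ∣ u → q ∣ u → l ∣ u)
    (hf : SegmentApproximable f) : DirectedOn (· ∣ ·) {p | f p = true} := by
  classical
  intro p hp q hq
  obtain ⟨m, hm⟩ := hf {p, q}
  obtain ⟨l, hpl, hql, hl⟩ := hlcm p q ⟨m, (hm p (by simp)).mp hp, (hm q (by simp)).mp hq⟩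
  obtain ⟨m', hm'⟩ := hf {p, q, l}
  exact ⟨l, (hm' l (by simp)).mpr (hl m' ((hm' p (by simp)).mp hp) ((hm' q (by simp)).mp hq)),
    hpl, hql⟩

end SegmentApproximable

theorem segmentApproximable_of_directedOn {f : M → Bool} (hne : ∃ p, f p = true)
    (hher : ∀ p q, p ∣ q → f q = true → f p = true)
    (hdir : DirectedOn (· ∣ ·) {p | f p = true}) : SegmentApproximable f := by
  classical
  intro I
  obtain ⟨p₀, hp₀⟩ := hne
  have : Nonempty {p | f p = true} := ⟨⟨p₀, hp₀⟩⟩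
  obtain ⟨⟨m, hm⟩, hmI⟩ :=
    (directedOn_iff_directed.mp hdir).finset_le (I.subtype fun p => f p = true)
  exact ⟨m, fun p _ => ⟨fun hp => hmI ⟨p, hp⟩ (by simpa), fun hpm => hher p m hpm hm⟩⟩

end Segments

theorem stmt18_general {Q : Type*} [Group Q] (P : Submonoid Q)
    (hQL2 : ∀ p q : P, (∃ u : P, (∃ s : P, u = p * s) ∧ (∃ s : P, u = q * s)) →
      ∃ l : P, (∃ s : P, l = p * s) ∧ (∃ s : P, l = q * s) ∧
        ∀ u : P, (∃ s : P, u = p * s) → (∃ s : P, u = q * s) → ∃ s : P, u = l * s) :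
    closure {f : P → Bool | ∃ m : P, ∀ p : P, f p = true ↔ ∃ s : P, m = p * s} =
      {f : P → Bool |
        (∃ p : P, f p = true) ∧
        (∀ p q : P, (∃ s : P, q = p * s) → f q = true → f p = true) ∧
        (∀ p q : P, f p = true → f q = true →
          ∃ r : P, f r = true ∧ (∃ s : P, r = p * s) ∧ (∃ s : P, r = q * s))} := by
  ext f
  refine mem_closure_segments_iff.trans ⟨fun hf => ?_, fun ⟨hne, hher, hdir⟩ => ?_⟩
  · exact ⟨hf.exists_eq_true, fun _ _ => hf.of_dvd, fun p q hp hq => hf.directedOn hQL2 p hp q hq⟩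
  · exact segmentApproximable_of_directedOn hne hher fun p hp q hq => hdir p q hp hq

/-- let `P` be a quasi-lattice ordered submonoid of a group `Q`.  For
`m ∈ P` let `χ_{[1,m]} : P → Bool` be the characteristic function of the segment
`[1,m] = {p : p ≤ m}` (where `p ≤ m ↔ ∃ s ∈ P, m = p s`).  Then the closure of
`{χ_{[1,m]} : m ∈ P}` in `P → Bool` (product topology, `Bool` discrete) is precisely
the set of characteristic functions of the nonempty hereditary directed subsets of
`P` (Nica's Wiener–Hopf compactification `Ω(P)`). -/
theorem stmt18 {Q : Type*} [Group Q] (P : Submonoid Q)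
    (hQL1 : ∀ q : Q, q ∈ P → q⁻¹ ∈ P → q = 1)
    (hQL2 : ∀ p q : P, (∃ u : P, (∃ s : P, u = p * s) ∧ (∃ s : P, u = q * s)) →
      ∃ l : P, (∃ s : P, l = p * s) ∧ (∃ s : P, l = q * s) ∧
        ∀ u : P, (∃ s : P, u = p * s) → (∃ s : P, u = q * s) → ∃ s : P, u = l * s) :
    closure {f : P → Bool | ∃ m : P, ∀ p : P, f p = true ↔ ∃ s : P, m = p * s} =
      {f : P → Bool |
        (∃ p : P, f p = true) ∧
        (∀ p q : P, (∃ s : P, q = p * s) → f q = true → f p = true) ∧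
        (∀ p q : P, f p = true → f q = true →
          ∃ r : P, f r = true ∧ (∃ s : P, r = p * s) ∧ (∃ s : P, r = q * s))} :=
  stmt18_general P hQL2
end

section
/- Suppose the partial action (X,P,T) is directed. Let Λ = X*P = {(x,n) ∈ X × P : x ∈ U(n)} with the prefix order (x,m) ≤ (y,n) iff x = y and there exists p ∈ P with n = mp. Then for every x ∈ X the set J(x) := {(x,n) : x ∈ U(n)} is hereditary ((z,m) ≤ (y,n) ∈ J(x) implies (z,m) ∈ J(x)) and directed (any two elements of J(x) have a common upper bound in J(x)), and the map x ↦ J(x) is injective. -/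
/-- The prefix order on `Λ = X*P = {(x,n) : x ∈ U n}`:
`(x,m) ≤ (y,n)` iff `x = y` and `n = m·p` for some `p ∈ P`. -/
def lamLe {P : Type*} [Monoid P] {X : Type*} (a b : X × P) : Prop :=
  a.1 = b.1 ∧ ∃ p : P, b.2 = a.2 * p

namespace PartialAction

variable {P : Type*} [Monoid P] {X : Type*} (A : PartialAction P X)

theorem mem_U_of_pLe {x : X} {m n : P} (hmn : pLe m n) (hx : x ∈ A.U n) : x ∈ A.U m := by
  obtain ⟨p, rfl⟩ := hmn
  exact ((A.mem_U_mul x m p).mp hx).1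

def J (x : X) : Set (X × P) := {c | c.1 = x ∧ x ∈ A.U c.2}

theorem J_hereditary {x : X} {a b : X × P} (hab : lamLe a b) (hb : b ∈ A.J x) : a ∈ A.J x :=
  ⟨hab.1.trans hb.1, A.mem_U_of_pLe hab.2 hb.2⟩

theorem J_directed (hdir : A.IsDirectedAction) {x : X} {a b : X × P}
    (ha : a ∈ A.J x) (hb : b ∈ A.J x) : ∃ c ∈ A.J x, lamLe a c ∧ lamLe b c := by
  obtain ⟨r, har, hbr, hU⟩ := hdir a.2 b.2 ⟨x, ha.2, hb.2⟩
  have hxr : x ∈ A.U r := hU ▸ ⟨ha.2, hb.2⟩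
  exact ⟨(x, r), ⟨rfl, hxr⟩, ⟨ha.1, har⟩, ⟨hb.1, hbr⟩⟩

theorem J_injective : Function.Injective A.J := by
  intro x y hxy
  have hx : (x, (1 : P)) ∈ A.J y := hxy ▸ ⟨rfl, A.mem_U_one x⟩
  exact hx.1

end PartialAction

/-- suppose the partial action `(X,P,T)` is directed.  For `x ∈ X` let
`J x = {(x,n) : x ∈ U n} ⊆ Λ = X*P`.  Then each `J x` is hereditary and directed for
the prefix order, and `x ↦ J x` is injective. -/
theorem stmt19 {P : Type*} [Monoid P] {X : Type*} (A : PartialAction P X)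
    (hdir : A.IsDirectedAction) :
    (∀ x : X, ∀ a b : X × P, lamLe a b →
        b ∈ {c : X × P | c.1 = x ∧ x ∈ A.U c.2} →
        a ∈ {c : X × P | c.1 = x ∧ x ∈ A.U c.2}) ∧
    (∀ x : X, ∀ a ∈ {c : X × P | c.1 = x ∧ x ∈ A.U c.2},
        ∀ b ∈ {c : X × P | c.1 = x ∧ x ∈ A.U c.2},
        ∃ c ∈ {c : X × P | c.1 = x ∧ x ∈ A.U c.2}, lamLe a c ∧ lamLe b c) ∧
    (Function.Injective fun x : X => {c : X × P | c.1 = x ∧ x ∈ A.U c.2}) := by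
  exact ⟨fun _ _ _ => A.J_hereditary, fun _ _ ha _ hb => A.J_directed hdir ha hb, A.J_injective⟩
end
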